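/- arXiv:1910.08267 — 3 statements merged into one kernel-verified Lean document; each statement's English description precedes it below -/
import Mathlib

section
/- Let α(y) = √(a_{ij} y^i y^j) be a Euclidean norm on ℝⁿ given by a positive definite matrix (a_{ij}), and β(y) = b_i y^i a linear form with ‖β‖_α := √(a^{ij}b_ib_j) < 1. Then F = α + β is a Minkowski norm, and its dual norm F* on (ℝⁿ)* is again of Randers type: F*(ξ) = α*(ξ) + β*(ξ), where α*(ξ) = √(a*^{ij} ξ_i ξ_j) with a*^{ij} = [(1−‖β‖²_α)a^{ij} + b^i b^j]/(1−‖β‖²_α)², and β*(ξ) = b*^i ξ_i with b*^i = −b^i/(1−‖β‖²_α), where b^i = a^{ij}b_j. -/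
open Set Matrix

/-- The fundamental tensor `g_{ij}(y) = (1/2)[F²]_{y^i y^j}(y)`. -/
noncomputable def gmat {n : ℕ} (F : (Fin n → ℝ) → ℝ) (y : Fin n → ℝ) :
    Matrix (Fin n) (Fin n) ℝ := fun i j =>
  (1 / 2) * fderiv ℝ (fun z => fderiv ℝ (fun w => (F w) ^ 2) z (Pi.single i 1)) y (Pi.single j 1)

/-- The dual norm `F*(ξ) = sup_{y ≠ 0} ξ(y)/F(y)`, in coordinates. -/
noncomputable def dualNorm {n : ℕ} (F : (Fin n → ℝ) → ℝ) (ξ : Fin n → ℝ) : ℝ :=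
  sSup ((fun y => ξ ⬝ᵥ y / F y) '' {y : Fin n → ℝ | y ≠ 0})

namespace Stmt7
variable {n : ℕ}

noncomputable def dpCLM (u : Fin n → ℝ) : (Fin n → ℝ) →L[ℝ] ℝ :=
  LinearMap.toContinuousLinearMap
    { toFun := fun v => u ⬝ᵥ v
      map_add' := fun x y => dotProduct_add u x y
      map_smul' := fun c x => by simp }

@[simp] lemma dpCLM_apply (u v : Fin n → ℝ) : dpCLM u v = u ⬝ᵥ v := rfl

noncomputable def aCLM (a : Matrix (Fin n) (Fin n) ℝ) : (Fin n → ℝ) →L[ℝ] (Fin n → ℝ) :=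
  LinearMap.toContinuousLinearMap a.mulVecLin

@[simp] lemma aCLM_apply (a : Matrix (Fin n) (Fin n) ℝ) (v : Fin n → ℝ) : aCLM a v = a *ᵥ v := rfl

noncomputable def bCLM (a : Matrix (Fin n) (Fin n) ℝ) :
    (Fin n → ℝ) →L[ℝ] (Fin n → ℝ) →L[ℝ] ℝ :=
  LinearMap.toContinuousLinearMap
    { toFun := fun u => (dpCLM u).comp (aCLM a)
      map_add' := fun u u' => by ext v; simp [add_dotProduct]
      map_smul' := fun c u => by ext v; simp [smul_dotProduct] }

@[simp] lemma bCLM_apply (a : Matrix (Fin n) (Fin n) ℝ) (u v : Fin n → ℝ) :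
    bCLM a u v = u ⬝ᵥ a *ᵥ v := rfl

lemma dot_symm (a : Matrix (Fin n) (Fin n) ℝ) (hsym : aᵀ = a) (u v : Fin n → ℝ) :
    u ⬝ᵥ a *ᵥ v = v ⬝ᵥ a *ᵥ u := by
  rw [dotProduct_mulVec, ← mulVec_transpose, hsym, dotProduct_comm]

lemma contDiff_Q (a : Matrix (Fin n) (Fin n) ℝ) {N : WithTop ℕ∞} :
    ContDiff ℝ N (fun z : Fin n → ℝ => z ⬝ᵥ a *ᵥ z) :=
  ((bCLM a).isBoundedBilinearMap.contDiff).comp (contDiff_id.prodMk contDiff_id)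

lemma hasFDerivAt_Q (a : Matrix (Fin n) (Fin n) ℝ) (hsym : aᵀ = a) (y : Fin n → ℝ) :
    HasFDerivAt (fun z : Fin n → ℝ => z ⬝ᵥ a *ᵥ z) (dpCLM ((2:ℝ) • (a *ᵥ y))) y := by
  have h := ((bCLM a).hasFDerivAt (x := y)).clm_apply (hasFDerivAt_id y)
  refine h.congr_fderiv ?_
  ext v
  simp [IsBoundedBilinearMap.deriv_apply, dot_symm a hsym y v, smul_dotProduct,
    dotProduct_comm (a *ᵥ y) v, two_mul]

lemma vecMulVec_mulVec' (u w v : Fin n → ℝ) : vecMulVec u w *ᵥ v = (w ⬝ᵥ v) • u := by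
  ext i
  simp only [vecMulVec_apply, mulVec, dotProduct, Pi.smul_apply, smul_eq_mul, Finset.sum_mul,
    Finset.mul_sum]
  exact Finset.sum_congr rfl fun j _ => by ring


lemma qpos (a : Matrix (Fin n) (Fin n) ℝ) (ha : a.PosDef) {y : Fin n → ℝ} (hy : y ≠ 0) :
    0 < y ⬝ᵥ a *ᵥ y := by
  have := ha.dotProduct_mulVec_pos hy
  simpa using this

lemma qnonneg (a : Matrix (Fin n) (Fin n) ℝ) (ha : a.PosDef) (y : Fin n → ℝ) :
    0 ≤ y ⬝ᵥ a *ᵥ y := by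
  rcases eq_or_ne y 0 with rfl | hy
  · simp
  · exact (qpos a ha hy).le

lemma cauchy (a : Matrix (Fin n) (Fin n) ℝ) (ha : a.PosDef) (hsym : aᵀ = a) (u v : Fin n → ℝ) :
    (u ⬝ᵥ a *ᵥ v) ^ 2 ≤ (u ⬝ᵥ a *ᵥ u) * (v ⬝ᵥ a *ᵥ v) := by
  have key : ∀ t : ℝ, 0 ≤ (u ⬝ᵥ a *ᵥ u) * (t * t) + (2 * (u ⬝ᵥ a *ᵥ v)) * t + v ⬝ᵥ a *ᵥ v := by
    intro t
    have h0 := qnonneg a ha (t • u + v)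
    have he : (t • u + v) ⬝ᵥ a *ᵥ (t • u + v)
        = (u ⬝ᵥ a *ᵥ u) * (t * t) + (2 * (u ⬝ᵥ a *ᵥ v)) * t + v ⬝ᵥ a *ᵥ v := by
      simp only [add_dotProduct, dotProduct_add, mulVec_add, mulVec_smul, smul_dotProduct,
        dotProduct_smul, smul_eq_mul, dot_symm a hsym v u]
      ring
    linarith [he ▸ h0]
  have hd := discrim_le_zero key
  rw [discrim] at hd
  nlinarith [hd]

lemma cauchy_eq (a : Matrix (Fin n) (Fin n) ℝ) (ha : a.PosDef) (hsym : aᵀ = a)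
    {u v : Fin n → ℝ} (hu : u ≠ 0)
    (h : (u ⬝ᵥ a *ᵥ v) ^ 2 = (u ⬝ᵥ a *ᵥ u) * (v ⬝ᵥ a *ᵥ v)) : ∃ t : ℝ, v = t • u := by
  have hA : 0 < u ⬝ᵥ a *ᵥ u := qpos a ha hu
  set X := u ⬝ᵥ a *ᵥ v with hX
  refine ⟨X / (u ⬝ᵥ a *ᵥ u), ?_⟩
  by_contra hne
  have hw : v - (X / (u ⬝ᵥ a *ᵥ u)) • u ≠ 0 := sub_ne_zero.mpr fun h' => hne h'
  have hpos := qpos a ha hw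
  have he : (v - (X / (u ⬝ᵥ a *ᵥ u)) • u) ⬝ᵥ a *ᵥ (v - (X / (u ⬝ᵥ a *ᵥ u)) • u)
      = v ⬝ᵥ a *ᵥ v - 2 * (X / (u ⬝ᵥ a *ᵥ u)) * X
        + (X / (u ⬝ᵥ a *ᵥ u)) * ((X / (u ⬝ᵥ a *ᵥ u)) * (u ⬝ᵥ a *ᵥ u)) := by
    simp only [sub_dotProduct, dotProduct_sub, mulVec_sub, mulVec_smul, smul_dotProduct,
      dotProduct_smul, smul_eq_mul, dot_symm a hsym v u, ← hX]
    ring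
  rw [he] at hpos
  rw [div_mul_cancel₀ _ hA.ne'] at hpos
  have : v ⬝ᵥ a *ᵥ v = X ^ 2 / (u ⬝ᵥ a *ᵥ u) := by
    field_simp at h ⊢
    linarith [h]
  rw [this] at hpos
  field_simp at hpos
  nlinarith [hpos, hA]


lemma dot_inv_eq (a : Matrix (Fin n) (Fin n) ℝ) (hsym : aᵀ = a) (hinv : a * a⁻¹ = 1)
    (b y : Fin n → ℝ) : (a⁻¹ *ᵥ b) ⬝ᵥ a *ᵥ y = b ⬝ᵥ y := by
  rw [dot_symm a hsym, mulVec_mulVec, hinv, one_mulVec, dotProduct_comm]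

lemma posF (a : Matrix (Fin n) (Fin n) ℝ) (ha : a.PosDef) (hsym : aᵀ = a)
    (hinv : a * a⁻¹ = 1) (b : Fin n → ℝ) (b2 : ℝ) (hb2 : b2 = b ⬝ᵥ (a⁻¹ *ᵥ b)) (hb : b2 < 1)
    {y : Fin n → ℝ} (hy : y ≠ 0) : 0 < Real.sqrt (y ⬝ᵥ a *ᵥ y) + b ⬝ᵥ y := by
  have hQ : 0 < y ⬝ᵥ a *ᵥ y := qpos a ha hy
  have hs : 0 < Real.sqrt (y ⬝ᵥ a *ᵥ y) := Real.sqrt_pos.mpr hQ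
  have hs2 : Real.sqrt (y ⬝ᵥ a *ᵥ y) ^ 2 = y ⬝ᵥ a *ᵥ y := Real.sq_sqrt hQ.le
  have hcs := cauchy a ha hsym (a⁻¹ *ᵥ b) y
  rw [dot_inv_eq a hsym hinv b y, dot_inv_eq a hsym hinv b (a⁻¹ *ᵥ b)] at hcs
  rw [← hb2] at hcs
  nlinarith [hcs, hQ, hs, hs2, hb, sq_nonneg (Real.sqrt (y ⬝ᵥ a *ᵥ y) + b ⬝ᵥ y),
    mul_pos hs hs]


lemma hasFDerivAt_F (a : Matrix (Fin n) (Fin n) ℝ) (ha : a.PosDef) (hsym : aᵀ = a)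
    (b : Fin n → ℝ) {z : Fin n → ℝ} (hz : z ≠ 0) :
    HasFDerivAt (fun w : Fin n → ℝ => Real.sqrt (w ⬝ᵥ a *ᵥ w) + b ⬝ᵥ w)
      (dpCLM ((Real.sqrt (z ⬝ᵥ a *ᵥ z))⁻¹ • (a *ᵥ z) + b)) z := by
  have hQ : 0 < z ⬝ᵥ a *ᵥ z := qpos a ha hz
  have hs : Real.sqrt (z ⬝ᵥ a *ᵥ z) ≠ 0 := (Real.sqrt_pos.mpr hQ).ne'
  have h1 : HasFDerivAt (fun w : Fin n → ℝ => Real.sqrt (w ⬝ᵥ a *ᵥ w))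
      ((1 / (2 * Real.sqrt (z ⬝ᵥ a *ᵥ z))) • dpCLM ((2:ℝ) • (a *ᵥ z))) z :=
    (Real.hasDerivAt_sqrt hQ.ne').comp_hasFDerivAt z (hasFDerivAt_Q a hsym z)
  have h2 : HasFDerivAt (fun w : Fin n → ℝ => b ⬝ᵥ w) (dpCLM b) z :=
    (dpCLM b).hasFDerivAt
  have h := h1.add h2
  refine h.congr_fderiv ?_
  ext v
  simp only [ContinuousLinearMap.add_apply, ContinuousLinearMap.smul_apply, dpCLM_apply,
    add_dotProduct, smul_dotProduct, smul_eq_mul]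
  field_simp

lemma gmat_eq (a : Matrix (Fin n) (Fin n) ℝ) (ha : a.PosDef) (hsym : aᵀ = a) (b : Fin n → ℝ)
    {y : Fin n → ℝ} (hy : y ≠ 0) :
    gmat (fun w => Real.sqrt (w ⬝ᵥ a *ᵥ w) + b ⬝ᵥ w) y =
      vecMulVec ((Real.sqrt (y ⬝ᵥ a *ᵥ y))⁻¹ • (a *ᵥ y) + b)
          ((Real.sqrt (y ⬝ᵥ a *ᵥ y))⁻¹ • (a *ᵥ y) + b)
        + ((Real.sqrt (y ⬝ᵥ a *ᵥ y) + b ⬝ᵥ y) * (Real.sqrt (y ⬝ᵥ a *ᵥ y))⁻¹) • a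
        + (-((Real.sqrt (y ⬝ᵥ a *ᵥ y) + b ⬝ᵥ y) * ((Real.sqrt (y ⬝ᵥ a *ᵥ y))⁻¹) ^ 3)) •
            vecMulVec (a *ᵥ y) (a *ᵥ y) := by
  have hQ : 0 < y ⬝ᵥ a *ᵥ y := qpos a ha hy
  have hs : 0 < Real.sqrt (y ⬝ᵥ a *ᵥ y) := Real.sqrt_pos.mpr hQ
  ext i j
  show (1/2 : ℝ) * fderiv ℝ (fun z => fderiv ℝ
      (fun w => (Real.sqrt (w ⬝ᵥ a *ᵥ w) + b ⬝ᵥ w) ^ 2) z (Pi.single i 1)) y (Pi.single j 1) = _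
  have hev : (fun z : Fin n → ℝ => fderiv ℝ
        (fun w => (Real.sqrt (w ⬝ᵥ a *ᵥ w) + b ⬝ᵥ w) ^ 2) z (Pi.single i 1)) =ᶠ[nhds y]
      (fun z : Fin n → ℝ => 2 * ((Real.sqrt (z ⬝ᵥ a *ᵥ z) + b ⬝ᵥ z)
        * ((Real.sqrt (z ⬝ᵥ a *ᵥ z))⁻¹ * (a *ᵥ z) i + b i))) := by
    filter_upwards [isOpen_compl_singleton.mem_nhds hy] with z hz
    have hz' : z ≠ 0 := hz
    have hdF := hasFDerivAt_F a ha hsym b hz'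
    have heq : (fun w : Fin n → ℝ => (Real.sqrt (w ⬝ᵥ a *ᵥ w) + b ⬝ᵥ w) ^ 2)
        = fun w => (Real.sqrt (w ⬝ᵥ a *ᵥ w) + b ⬝ᵥ w) * (Real.sqrt (w ⬝ᵥ a *ᵥ w) + b ⬝ᵥ w) :=
      funext fun w => pow_two _
    rw [heq, (hdF.fun_mul hdF).fderiv]
    simp only [ContinuousLinearMap.add_apply, ContinuousLinearMap.smul_apply, dpCLM_apply,
      dotProduct_single, Pi.add_apply, Pi.smul_apply, smul_eq_mul, mul_one]
    ring
  rw [Filter.EventuallyEq.fderiv_eq hev]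
  have h2 : HasFDerivAt (fun z : Fin n → ℝ => Real.sqrt (z ⬝ᵥ a *ᵥ z))
      ((1 / (2 * Real.sqrt (y ⬝ᵥ a *ᵥ y))) • dpCLM ((2:ℝ) • (a *ᵥ y))) y :=
    (Real.hasDerivAt_sqrt hQ.ne').comp_hasFDerivAt y (hasFDerivAt_Q a hsym y)
  have h3 : HasFDerivAt (fun z : Fin n → ℝ => (Real.sqrt (z ⬝ᵥ a *ᵥ z))⁻¹)
      ((-(Real.sqrt (y ⬝ᵥ a *ᵥ y) ^ 2)⁻¹)
        • ((1 / (2 * Real.sqrt (y ⬝ᵥ a *ᵥ y))) • dpCLM ((2:ℝ) • (a *ᵥ y)))) y :=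
    (hasDerivAt_inv hs.ne').comp_hasFDerivAt y h2
  have h1 : HasFDerivAt (fun z : Fin n → ℝ => (a *ᵥ z) i)
      ((ContinuousLinearMap.proj i).comp (aCLM a)) y :=
    ((ContinuousLinearMap.proj i).comp (aCLM a)).hasFDerivAt
  have h5 : HasFDerivAt
      (fun z : Fin n → ℝ => (Real.sqrt (z ⬝ᵥ a *ᵥ z))⁻¹ * (a *ᵥ z) i + b i)
      ((Real.sqrt (y ⬝ᵥ a *ᵥ y))⁻¹ • ((ContinuousLinearMap.proj i).comp (aCLM a))
        + (a *ᵥ y) i • ((-(Real.sqrt (y ⬝ᵥ a *ᵥ y) ^ 2)⁻¹)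
            • ((1 / (2 * Real.sqrt (y ⬝ᵥ a *ᵥ y))) • dpCLM ((2:ℝ) • (a *ᵥ y))))) y :=
    (h3.mul h1).add_const (b i)
  have h6 := hasFDerivAt_F a ha hsym b hy
  have h7 : HasFDerivAt
      (fun z : Fin n → ℝ => 2 * ((Real.sqrt (z ⬝ᵥ a *ᵥ z) + b ⬝ᵥ z)
        * ((Real.sqrt (z ⬝ᵥ a *ᵥ z))⁻¹ * (a *ᵥ z) i + b i)))
      ((2:ℝ) • ((Real.sqrt (y ⬝ᵥ a *ᵥ y) + b ⬝ᵥ y)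
          • ((Real.sqrt (y ⬝ᵥ a *ᵥ y))⁻¹ • ((ContinuousLinearMap.proj i).comp (aCLM a))
            + (a *ᵥ y) i • ((-(Real.sqrt (y ⬝ᵥ a *ᵥ y) ^ 2)⁻¹)
              • ((1 / (2 * Real.sqrt (y ⬝ᵥ a *ᵥ y))) • dpCLM ((2:ℝ) • (a *ᵥ y)))))
        + ((Real.sqrt (y ⬝ᵥ a *ᵥ y))⁻¹ * (a *ᵥ y) i + b i)
          • dpCLM ((Real.sqrt (y ⬝ᵥ a *ᵥ y))⁻¹ • (a *ᵥ y) + b))) y :=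
    (h6.mul h5).const_mul 2
  rw [h7.fderiv]
  simp only [ContinuousLinearMap.smul_apply, ContinuousLinearMap.add_apply,
    ContinuousLinearMap.comp_apply, ContinuousLinearMap.proj_apply, dpCLM_apply, aCLM_apply,
    dotProduct_single, mulVec_single_one, Matrix.col_apply, Pi.add_apply, Pi.smul_apply, smul_eq_mul, mul_one,
    Matrix.add_apply, Matrix.smul_apply, vecMulVec_apply]
  have hss : Real.sqrt (y ⬝ᵥ a *ᵥ y) ^ 2 = y ⬝ᵥ a *ᵥ y := Real.sq_sqrt hQ.le
  field_simp
  ring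


lemma scalar_key (s β A T L Q : ℝ) (hs : 0 < s) (hss : s ^ 2 = Q) (hF : 0 < s + β)
    (hA : 0 < A) (hCS : T ^ 2 ≤ Q * A) (hLT : T ^ 2 = Q * A → L ≠ 0) :
    0 < L ^ 2 + ((s + β) * s⁻¹) * A + (-((s + β) * (s⁻¹) ^ 3)) * T ^ 2 := by
  have e : ((s + β) * s⁻¹) * A + (-((s + β) * (s⁻¹) ^ 3)) * T ^ 2
      = (s + β) * (s⁻¹) ^ 3 * (Q * A - T ^ 2) := by
    rw [← hss]; field_simp; ring
  rcases hCS.lt_or_eq with hlt | heq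
  · have pos1 : 0 < (s + β) * (s⁻¹) ^ 3 := by positivity
    have := mul_pos pos1 (sub_pos.mpr hlt)
    nlinarith [sq_nonneg L]
  · have hL := hLT heq
    have hL2 : 0 < L ^ 2 := by rcases hL.lt_or_gt with h | h <;> nlinarith
    have e0 : (s + β) * s⁻¹ ^ 3 * (Q * A - T ^ 2) = 0 := by rw [heq]; ring
    linarith [e, e0]

lemma gmat_posdef (a : Matrix (Fin n) (Fin n) ℝ) (ha : a.PosDef) (hsym : aᵀ = a)
    (hinv : a * a⁻¹ = 1) (b : Fin n → ℝ) (b2 : ℝ) (hb2 : b2 = b ⬝ᵥ (a⁻¹ *ᵥ b)) (hb : b2 < 1)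
    {y : Fin n → ℝ} (hy : y ≠ 0) :
    (gmat (fun w => Real.sqrt (w ⬝ᵥ a *ᵥ w) + b ⬝ᵥ w) y).PosDef := by
  have hQ : 0 < y ⬝ᵥ a *ᵥ y := qpos a ha hy
  have hs : 0 < Real.sqrt (y ⬝ᵥ a *ᵥ y) := Real.sqrt_pos.mpr hQ
  have hss : Real.sqrt (y ⬝ᵥ a *ᵥ y) ^ 2 = y ⬝ᵥ a *ᵥ y := Real.sq_sqrt hQ.le
  have hF : 0 < Real.sqrt (y ⬝ᵥ a *ᵥ y) + b ⬝ᵥ y := posF a ha hsym hinv b b2 hb2 hb hy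
  rw [gmat_eq a ha hsym b hy]
  refine posDef_iff_dotProduct_mulVec.mpr ⟨?_, fun v hv => ?_⟩
  · rw [Matrix.IsHermitian, conjTranspose_eq_transpose_of_trivial]
    ext i j
    have haij : a j i = a i j := congrFun (congrFun hsym i) j
    simp only [Matrix.transpose_apply, Matrix.add_apply, Matrix.smul_apply, vecMulVec_apply,
      Pi.add_apply, Pi.smul_apply, smul_eq_mul]
    rw [haij]
    ring
  · have hexp : star v ⬝ᵥ ((vecMulVec ((Real.sqrt (y ⬝ᵥ a *ᵥ y))⁻¹ • (a *ᵥ y) + b)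
          ((Real.sqrt (y ⬝ᵥ a *ᵥ y))⁻¹ • (a *ᵥ y) + b)
        + ((Real.sqrt (y ⬝ᵥ a *ᵥ y) + b ⬝ᵥ y) * (Real.sqrt (y ⬝ᵥ a *ᵥ y))⁻¹) • a
        + (-((Real.sqrt (y ⬝ᵥ a *ᵥ y) + b ⬝ᵥ y) * ((Real.sqrt (y ⬝ᵥ a *ᵥ y))⁻¹) ^ 3)) •
            vecMulVec (a *ᵥ y) (a *ᵥ y)) *ᵥ v)
        = (((Real.sqrt (y ⬝ᵥ a *ᵥ y))⁻¹ • (a *ᵥ y) + b) ⬝ᵥ v) ^ 2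
          + ((Real.sqrt (y ⬝ᵥ a *ᵥ y) + b ⬝ᵥ y) * (Real.sqrt (y ⬝ᵥ a *ᵥ y))⁻¹) * (v ⬝ᵥ a *ᵥ v)
          + (-((Real.sqrt (y ⬝ᵥ a *ᵥ y) + b ⬝ᵥ y) * ((Real.sqrt (y ⬝ᵥ a *ᵥ y))⁻¹) ^ 3))
              * ((a *ᵥ y) ⬝ᵥ v) ^ 2 := by
      simp only [star_trivial, add_mulVec, smul_mulVec, vecMulVec_mulVec',
        dotProduct_add, dotProduct_smul, add_dotProduct, smul_dotProduct, smul_eq_mul]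
      rw [dotProduct_comm v b, dotProduct_comm v (a *ᵥ y)]
      ring
    rw [hexp]
    have hT : (a *ᵥ y) ⬝ᵥ v = y ⬝ᵥ a *ᵥ v := by
      rw [dotProduct_comm]; exact (dot_symm a hsym y v).symm
    refine scalar_key _ _ _ _ _ _ hs hss hF (qpos a ha hv) ?_ ?_
    · rw [hT]; exact cauchy a ha hsym y v
    · intro heq hL0
      obtain ⟨t, rfl⟩ := cauchy_eq a ha hsym hy (by rw [← hT]; linarith [heq])
      have ht : t ≠ 0 := by rintro rfl; simp at hv
      have hLval : ((Real.sqrt (y ⬝ᵥ a *ᵥ y))⁻¹ • (a *ᵥ y) + b) ⬝ᵥ (t • y)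
          = t * (Real.sqrt (y ⬝ᵥ a *ᵥ y) + b ⬝ᵥ y) := by
        rw [dotProduct_smul, add_dotProduct, smul_dotProduct]
        rw [dotProduct_comm (a *ᵥ y) y]
        have : (Real.sqrt (y ⬝ᵥ a *ᵥ y))⁻¹ * (y ⬝ᵥ a *ᵥ y) = Real.sqrt (y ⬝ᵥ a *ᵥ y) := by
          rw [← hss]; field_simp
          rw [Real.sqrt_sq (Real.sqrt_nonneg _)]
        simp only [smul_eq_mul, this]
      rw [hLval] at hL0
      exact mul_ne_zero ht hF.ne' hL0



lemma dual_eq (a : Matrix (Fin n) (Fin n) ℝ) (ha : a.PosDef) (hsym : aᵀ = a)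
    (hinv : a * a⁻¹ = 1) (b : Fin n → ℝ) (b2 : ℝ) (hb2 : b2 = b ⬝ᵥ (a⁻¹ *ᵥ b)) (hb : b2 < 1)
    (ξ : Fin n → ℝ) :
    dualNorm (fun y => Real.sqrt (y ⬝ᵥ a *ᵥ y) + b ⬝ᵥ y) ξ =
      Real.sqrt (ξ ⬝ᵥ ((1 - b2) ^ 2)⁻¹ • ((1 - b2) • a⁻¹ + vecMulVec (a⁻¹ *ᵥ b) (a⁻¹ *ᵥ b)) *ᵥ ξ)
        + (-(1 - b2)⁻¹ • (a⁻¹ *ᵥ b)) ⬝ᵥ ξ := by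
  have hainv : (a⁻¹).PosDef := ha.inv
  have hsyminv : (a⁻¹)ᵀ = a⁻¹ := by rw [Matrix.transpose_nonsing_inv, hsym]
  have h1b2 : 0 < 1 - b2 := by linarith
  rcases eq_or_ne ξ 0 with rfl | hxi
  · have hR0 : Real.sqrt ((0 : Fin n → ℝ) ⬝ᵥ ((1 - b2) ^ 2)⁻¹ • ((1 - b2) • a⁻¹
        + vecMulVec (a⁻¹ *ᵥ b) (a⁻¹ *ᵥ b)) *ᵥ (0 : Fin n → ℝ))
        + (-(1 - b2)⁻¹ • (a⁻¹ *ᵥ b)) ⬝ᵥ (0 : Fin n → ℝ) = 0 := by simp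
    rw [hR0]
    have himg : (fun y : Fin n → ℝ => (0 : Fin n → ℝ) ⬝ᵥ y / (Real.sqrt (y ⬝ᵥ a *ᵥ y) + b ⬝ᵥ y))
        = fun _ => (0 : ℝ) := by funext y; simp
    rcases isEmpty_or_nonempty (Fin n) with he | hne
    · have hS : {y : Fin n → ℝ | y ≠ 0} = ∅ := by
        ext y; simp [Subsingleton.elim y 0]
      rw [dualNorm, hS, Set.image_empty, Real.sSup_empty]
    · have hS : ({y : Fin n → ℝ | y ≠ 0} : Set (Fin n → ℝ)).Nonempty := by
        refine ⟨Pi.single (Classical.arbitrary (Fin n)) 1, fun h0 => ?_⟩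
        have := congrFun h0 (Classical.arbitrary (Fin n))
        simp at this
      rw [dualNorm, himg, Set.Nonempty.image_const hS 0]
      exact csSup_singleton 0
  · have hA0 : 0 ≤ (ξ ⬝ᵥ a⁻¹ *ᵥ ξ) := qnonneg a⁻¹ hainv ξ
    have hAxi : 0 < (ξ ⬝ᵥ a⁻¹ *ᵥ ξ) := qpos a⁻¹ hainv hxi
    have hD0 : 0 ≤ ((b ⬝ᵥ a⁻¹ *ᵥ ξ) ^ 2 + (1 - b2) * (ξ ⬝ᵥ a⁻¹ *ᵥ ξ)) := by nlinarith [sq_nonneg (b ⬝ᵥ a⁻¹ *ᵥ ξ)]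
    have hDpos : 0 < ((b ⬝ᵥ a⁻¹ *ᵥ ξ) ^ 2 + (1 - b2) * (ξ ⬝ᵥ a⁻¹ *ᵥ ξ)) := by nlinarith [sq_nonneg (b ⬝ᵥ a⁻¹ *ᵥ ξ)]
    have hw : (a⁻¹ *ᵥ b) ⬝ᵥ ξ = (b ⬝ᵥ a⁻¹ *ᵥ ξ) := by
      rw [dotProduct_comm]; exact dot_symm a⁻¹ hsyminv ξ b
    have hsqD : (Real.sqrt ((b ⬝ᵥ a⁻¹ *ᵥ ξ) ^ 2 + (1 - b2) * (ξ ⬝ᵥ a⁻¹ *ᵥ ξ))) ^ 2 = ((b ⬝ᵥ a⁻¹ *ᵥ ξ) ^ 2 + (1 - b2) * (ξ ⬝ᵥ a⁻¹ *ᵥ ξ)) := Real.sq_sqrt hD0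
    have hsD : 0 < Real.sqrt ((b ⬝ᵥ a⁻¹ *ᵥ ξ) ^ 2 + (1 - b2) * (ξ ⬝ᵥ a⁻¹ *ᵥ ξ)) := Real.sqrt_pos.mpr hDpos
    have hBD : (b ⬝ᵥ a⁻¹ *ᵥ ξ) ≤ Real.sqrt ((b ⬝ᵥ a⁻¹ *ᵥ ξ) ^ 2 + (1 - b2) * (ξ ⬝ᵥ a⁻¹ *ᵥ ξ)) := by
      rcases le_or_gt (b ⬝ᵥ a⁻¹ *ᵥ ξ) 0 with h | h
      · exact h.trans (Real.sqrt_nonneg _)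
      · calc (b ⬝ᵥ a⁻¹ *ᵥ ξ) = Real.sqrt ((b ⬝ᵥ a⁻¹ *ᵥ ξ) ^ 2) := (Real.sqrt_sq h.le).symm
          _ ≤ Real.sqrt ((b ⬝ᵥ a⁻¹ *ᵥ ξ) ^ 2 + (1 - b2) * (ξ ⬝ᵥ a⁻¹ *ᵥ ξ)) := Real.sqrt_le_sqrt (by nlinarith)
    have hRHS : Real.sqrt (ξ ⬝ᵥ ((1 - b2) ^ 2)⁻¹ • ((1 - b2) • a⁻¹
          + vecMulVec (a⁻¹ *ᵥ b) (a⁻¹ *ᵥ b)) *ᵥ ξ) + (-(1 - b2)⁻¹ • (a⁻¹ *ᵥ b)) ⬝ᵥ ξ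
        = (Real.sqrt ((b ⬝ᵥ a⁻¹ *ᵥ ξ) ^ 2 + (1 - b2) * (ξ ⬝ᵥ a⁻¹ *ᵥ ξ)) - (b ⬝ᵥ a⁻¹ *ᵥ ξ)) / (1 - b2) := by
      have hinner : ξ ⬝ᵥ ((1 - b2) ^ 2)⁻¹ • ((1 - b2) • a⁻¹
          + vecMulVec (a⁻¹ *ᵥ b) (a⁻¹ *ᵥ b)) *ᵥ ξ = ((b ⬝ᵥ a⁻¹ *ᵥ ξ) ^ 2 + (1 - b2) * (ξ ⬝ᵥ a⁻¹ *ᵥ ξ)) * ((1 - b2) ^ 2)⁻¹ := by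
        simp only [smul_mulVec, add_mulVec, vecMulVec_mulVec', dotProduct_smul,
          dotProduct_add, smul_eq_mul, hw]
        rw [dot_symm a⁻¹ hsyminv ξ b]
        ring
      rw [hinner, Real.sqrt_mul hD0, Real.sqrt_inv, Real.sqrt_sq h1b2.le]
      simp only [neg_smul, neg_dotProduct, smul_dotProduct, hw, smul_eq_mul]
      ring
    rw [hRHS]
    obtain ⟨c, hceq⟩ : ∃ c : ℝ, c = (Real.sqrt ((b ⬝ᵥ a⁻¹ *ᵥ ξ) ^ 2 + (1 - b2) * (ξ ⬝ᵥ a⁻¹ *ᵥ ξ)) - (b ⬝ᵥ a⁻¹ *ᵥ ξ)) / (1 - b2) := ⟨_, rfl⟩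
    rw [← hceq]
    have hc1 : c * (1 - b2) = Real.sqrt ((b ⬝ᵥ a⁻¹ *ᵥ ξ) ^ 2 + (1 - b2) * (ξ ⬝ᵥ a⁻¹ *ᵥ ξ)) - (b ⬝ᵥ a⁻¹ *ᵥ ξ) := by rw [hceq]; field_simp
    have hcge : 0 ≤ c := hceq ▸ div_nonneg (by linarith) h1b2.le
    have hq2 : ((1 - b2) * c ^ 2 + 2 * (b ⬝ᵥ a⁻¹ *ᵥ ξ) * c) * (1 - b2) = (ξ ⬝ᵥ a⁻¹ *ᵥ ξ) * (1 - b2) := by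
      linear_combination (c * (1 - b2) + Real.sqrt ((b ⬝ᵥ a⁻¹ *ᵥ ξ) ^ 2 + (1 - b2) * (ξ ⬝ᵥ a⁻¹ *ᵥ ξ)) + (b ⬝ᵥ a⁻¹ *ᵥ ξ)) * hc1 + hsqD
    have hq : (1 - b2) * c ^ 2 + 2 * (b ⬝ᵥ a⁻¹ *ᵥ ξ) * c = (ξ ⬝ᵥ a⁻¹ *ᵥ ξ) := mul_right_cancel₀ h1b2.ne' hq2
    have hetaQ : (ξ - c • b) ⬝ᵥ a⁻¹ *ᵥ (ξ - c • b) = c ^ 2 := by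
      simp only [sub_dotProduct, dotProduct_sub, mulVec_sub, mulVec_smul, smul_dotProduct,
        dotProduct_smul, smul_eq_mul]
      rw [dot_symm a⁻¹ hsyminv ξ b, ← hb2]
      linear_combination -hq
    have hub : ∀ y : Fin n → ℝ, y ≠ 0 →
        ξ ⬝ᵥ y / (Real.sqrt (y ⬝ᵥ a *ᵥ y) + b ⬝ᵥ y) ≤ c := by
      intro y hy
      have hFy := posF a ha hsym hinv b b2 hb2 hb hy
      rw [div_le_iff₀ hFy]
      have hQy := qpos a ha hy
      have hsy : Real.sqrt (y ⬝ᵥ a *ᵥ y) ^ 2 = y ⬝ᵥ a *ᵥ y := Real.sq_sqrt hQy.le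
      have hsy0 : 0 ≤ Real.sqrt (y ⬝ᵥ a *ᵥ y) := Real.sqrt_nonneg _
      have hcs := cauchy a ha hsym (a⁻¹ *ᵥ (ξ - c • b)) y
      rw [dot_inv_eq a hsym hinv (ξ - c • b) y,
        dot_inv_eq a hsym hinv (ξ - c • b) (a⁻¹ *ᵥ (ξ - c • b)), hetaQ] at hcs
      have h1 : (ξ - c • b) ⬝ᵥ y ≤ c * Real.sqrt (y ⬝ᵥ a *ᵥ y) := by
        nlinarith [hcs, hcge, hsy0, hsy, mul_nonneg hcge hsy0,
          sq_nonneg ((ξ - c • b) ⬝ᵥ y - c * Real.sqrt (y ⬝ᵥ a *ᵥ y))]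
      have h2 : ξ ⬝ᵥ y = (ξ - c • b) ⬝ᵥ y + c * (b ⬝ᵥ y) := by
        simp only [sub_dotProduct, smul_dotProduct, smul_eq_mul]; ring
      rw [h2]; nlinarith [h1]
    have hQ0 : (a⁻¹ *ᵥ (ξ - c • b)) ⬝ᵥ a *ᵥ (a⁻¹ *ᵥ (ξ - c • b)) = c ^ 2 := by
      rw [dot_inv_eq a hsym hinv (ξ - c • b) (a⁻¹ *ᵥ (ξ - c • b))]
      exact hetaQ
    have hsq0 : Real.sqrt ((a⁻¹ *ᵥ (ξ - c • b)) ⬝ᵥ a *ᵥ (a⁻¹ *ᵥ (ξ - c • b))) = c := by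
      rw [hQ0]; exact Real.sqrt_sq hcge
    have hby0 : b ⬝ᵥ (a⁻¹ *ᵥ (ξ - c • b)) = (b ⬝ᵥ a⁻¹ *ᵥ ξ) - c * b2 := by
      simp only [mulVec_sub, mulVec_smul, dotProduct_sub, dotProduct_smul, smul_eq_mul]
      rw [← hb2]
    have hxy0 : ξ ⬝ᵥ (a⁻¹ *ᵥ (ξ - c • b)) = (ξ ⬝ᵥ a⁻¹ *ᵥ ξ) - c * (b ⬝ᵥ a⁻¹ *ᵥ ξ) := by
      simp only [mulVec_sub, mulVec_smul, dotProduct_sub, dotProduct_smul, smul_eq_mul]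
      rw [dot_symm a⁻¹ hsyminv ξ b]
    have hFy0 : Real.sqrt ((a⁻¹ *ᵥ (ξ - c • b)) ⬝ᵥ a *ᵥ (a⁻¹ *ᵥ (ξ - c • b)))
        + b ⬝ᵥ (a⁻¹ *ᵥ (ξ - c • b)) = Real.sqrt ((b ⬝ᵥ a⁻¹ *ᵥ ξ) ^ 2 + (1 - b2) * (ξ ⬝ᵥ a⁻¹ *ᵥ ξ)) := by
      rw [hsq0, hby0]
      linear_combination hc1
    have hy0ne : a⁻¹ *ᵥ (ξ - c • b) ≠ 0 := by
      intro h0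
      rw [h0] at hFy0
      simp only [zero_dotProduct, dotProduct_zero, Real.sqrt_zero, add_zero, zero_add] at hFy0
      exact hsD.ne' hFy0.symm
    have hratio : ξ ⬝ᵥ (a⁻¹ *ᵥ (ξ - c • b))
        / (Real.sqrt ((a⁻¹ *ᵥ (ξ - c • b)) ⬝ᵥ a *ᵥ (a⁻¹ *ᵥ (ξ - c • b)))
          + b ⬝ᵥ (a⁻¹ *ᵥ (ξ - c • b))) = c := by
      rw [hFy0, hxy0, div_eq_iff hsD.ne']
      linear_combination -hq + c * hc1
    refine IsGreatest.csSup_eq ⟨⟨a⁻¹ *ᵥ (ξ - c • b), hy0ne, hratio⟩, ?_⟩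
    rintro r ⟨y, hy, rfl⟩
    exact hub y hy

end Stmt7


theorem stmt_7 {n : ℕ} (a : Matrix (Fin n) (Fin n) ℝ) (ha : a.PosDef) (b : Fin n → ℝ)
    (b2 : ℝ) (hb2 : b2 = b ⬝ᵥ (a⁻¹ *ᵥ b)) (hb : b2 < 1)
    (F : (Fin n → ℝ) → ℝ) (hF : ∀ y, F y = Real.sqrt (y ⬝ᵥ a *ᵥ y) + b ⬝ᵥ y) :
    -- F is a Minkowski norm:
    (∀ y : Fin n → ℝ, y ≠ 0 → 0 < F y) ∧
    (∀ (c : ℝ), 0 < c → ∀ y, F (c • y) = c * F y) ∧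
    ContDiffOn ℝ (⊤ : ℕ∞) F {0}ᶜ ∧
    (∀ y : Fin n → ℝ, y ≠ 0 → (gmat F y).PosDef) ∧
    -- and its dual norm is again of Randers type, F* = α* + β*:
    (∀ ξ : Fin n → ℝ, dualNorm F ξ =
      Real.sqrt (ξ ⬝ᵥ ((1 - b2) ^ 2)⁻¹ • ((1 - b2) • a⁻¹ + vecMulVec (a⁻¹ *ᵥ b) (a⁻¹ *ᵥ b)) *ᵥ ξ)
        + (-(1 - b2)⁻¹ • (a⁻¹ *ᵥ b)) ⬝ᵥ ξ) := by
  have hFe : F = fun y => Real.sqrt (y ⬝ᵥ a *ᵥ y) + b ⬝ᵥ y := funext hF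
  subst hFe
  have hsym : aᵀ = a := by
    have h := ha.isHermitian.eq
    rwa [Matrix.conjTranspose_eq_transpose_of_trivial] at h
  have hdet : IsUnit a.det := isUnit_iff_ne_zero.mpr ha.det_pos.ne'
  have hinv : a * a⁻¹ = 1 := Matrix.mul_nonsing_inv a hdet
  refine ⟨fun y hy => Stmt7.posF a ha hsym hinv b b2 hb2 hb hy, ?_, ?_,
    fun y hy => Stmt7.gmat_posdef a ha hsym hinv b b2 hb2 hb hy,
    fun ξ => Stmt7.dual_eq a ha hsym hinv b b2 hb2 hb ξ⟩
  · intro c hc y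
    simp only [smul_dotProduct, dotProduct_smul, mulVec_smul, smul_eq_mul]
    rw [show c * (c * (y ⬝ᵥ a *ᵥ y)) = c ^ 2 * (y ⬝ᵥ a *ᵥ y) by ring,
      Real.sqrt_mul (sq_nonneg c), Real.sqrt_sq hc.le]
    ring
  · intro y hy
    have hy' : y ≠ 0 := hy
    have hQ : 0 < y ⬝ᵥ a *ᵥ y := Stmt7.qpos a ha hy'
    have h1 : ContDiffAt ℝ (⊤ : ℕ∞) (fun z : Fin n → ℝ => Real.sqrt (z ⬝ᵥ a *ᵥ z)) y :=
      (Real.contDiffAt_sqrt hQ.ne').comp y (Stmt7.contDiff_Q a).contDiffAt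
    have h2 : ContDiffAt ℝ (⊤ : ℕ∞) (fun z : Fin n → ℝ => b ⬝ᵥ z) y :=
      (Stmt7.dpCLM b).contDiff.contDiffAt
    exact (h1.add h2).contDiffWithinAt
end

section
/- For a Randers norm F = α + β on ℝⁿ with ‖β‖_α < 1, the dual norm F* = α* + β* satisfies ‖β*‖_{α*} = ‖β‖_α, where ‖β*‖_{α*} = √(a_{*ij} b*^i b*^j) and (a_{*ij}) is the inverse of (a*^{ij}). -/
open Matrix

/-!
With `v = a⁻¹ b`, a Sherman–Morrison computation gives `a*⁻¹ = (1 - b²) (a - b bᵀ)`.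
Since `b* = -(1 - b²)⁻¹ v` and `(a - b bᵀ) v = (1 - b²) b`, the squared norm `b*ᵀ a*⁻¹ b*`
collapses to `(1 - b²)⁻² (1 - b²)² v·b = b²`.
-/

namespace Randers

variable {ι : Type*} [Fintype ι] [DecidableEq ι]

/-- `b² = a^{ij} b_i b_j`, the squared `α`-norm of `β`. -/
noncomputable def normSq {R : Type*} [CommRing R] (a : Matrix ι ι R) (b : ι → R) : R :=
  b ⬝ᵥ (a⁻¹ *ᵥ b)

theorem smul_inv_add_vecMulVec_mul_sub_vecMulVec {R : Type*} [CommRing R] {a : Matrix ι ι R}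
    (hsym : a.IsSymm) (hdet : IsUnit a.det) (b : ι → R) :
    ((1 - normSq a b) • a⁻¹ + vecMulVec (a⁻¹ *ᵥ b) (a⁻¹ *ᵥ b)) * (a - vecMulVec b b) =
      (1 - normSq a b) • 1 := by
  have hva : (a⁻¹ *ᵥ b) ᵥ* a = b := by
    rw [← mulVec_transpose, hsym.eq, mulVec_mulVec, mul_nonsing_inv a hdet, one_mulVec]
  rw [add_mul, mul_sub, mul_sub, smul_mul, smul_mul, nonsing_inv_mul a hdet, mul_vecMulVec,
    vecMulVec_mul, hva, vecMulVec_mul_vecMulVec, dotProduct_comm _ b, vecMulVec_smul, normSq]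
  module

variable {K : Type*} [Field K]

/-- The coefficients `a*^{ij}` of the dual Randers norm. -/
noncomputable def dualMetric (a : Matrix ι ι K) (b : ι → K) : Matrix ι ι K :=
  ((1 - normSq a b) ^ 2)⁻¹ • ((1 - normSq a b) • a⁻¹ + vecMulVec (a⁻¹ *ᵥ b) (a⁻¹ *ᵥ b))

/-- The coefficients `b*^i` of the dual Randers norm. -/
noncomputable def dualOneForm (a : Matrix ι ι K) (b : ι → K) : ι → K :=
  -(1 - normSq a b)⁻¹ • (a⁻¹ *ᵥ b)

variable {a : Matrix ι ι K} {b : ι → K}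

theorem inv_dualMetric (hsym : a.IsSymm) (hdet : IsUnit a.det) (hb : normSq a b ≠ 1) :
    (dualMetric a b)⁻¹ = (1 - normSq a b) • (a - vecMulVec b b) := by
  have hd : 1 - normSq a b ≠ 0 := sub_ne_zero.mpr hb.symm
  refine inv_eq_right_inv ?_
  rw [dualMetric, smul_mul, Matrix.mul_smul, smul_inv_add_vecMulVec_mul_sub_vecMulVec hsym hdet,
    smul_smul, smul_smul]
  convert one_smul K (1 : Matrix ι ι K) using 2
  field_simp

theorem normSq_dual (hsym : a.IsSymm) (hdet : IsUnit a.det) (hb : normSq a b ≠ 1) :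
    normSq (dualMetric a b) (dualOneForm a b) = normSq a b := by
  have hd : 1 - normSq a b ≠ 0 := sub_ne_zero.mpr hb.symm
  have hsub : (a - vecMulVec b b) *ᵥ (a⁻¹ *ᵥ b) = (1 - normSq a b) • b := by
    rw [sub_mulVec, vecMulVec_mulVec, mulVec_mulVec, mul_nonsing_inv a hdet, one_mulVec,
      op_smul_eq_smul, normSq, sub_smul, one_smul]
  have hvb : (a⁻¹ *ᵥ b) ⬝ᵥ b = normSq a b := dotProduct_comm _ _
  rw [normSq, inv_dualMetric hsym hdet hb, dualOneForm, smul_mulVec, mulVec_smul, hsub]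
  simp only [smul_dotProduct, dotProduct_smul, hvb, smul_eq_mul]
  field_simp

end Randers

open Randers in
theorem stmt_8 {n : ℕ} (a : Matrix (Fin n) (Fin n) ℝ) (ha : a.PosDef) (b : Fin n → ℝ)
    (b2 : ℝ) (hb2 : b2 = b ⬝ᵥ (a⁻¹ *ᵥ b)) (hb : b2 < 1)
    (astar : Matrix (Fin n) (Fin n) ℝ)
    (hastar : astar = ((1 - b2) ^ 2)⁻¹ • ((1 - b2) • a⁻¹ + vecMulVec (a⁻¹ *ᵥ b) (a⁻¹ *ᵥ b)))
    (bstar : Fin n → ℝ) (hbstar : bstar = -(1 - b2)⁻¹ • (a⁻¹ *ᵥ b)) :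
    Real.sqrt (bstar ⬝ᵥ (astar⁻¹ *ᵥ bstar)) = Real.sqrt b2 := by
  subst hastar hbstar hb2
  exact congrArg Real.sqrt <| normSq_dual (isHermitian_iff_isSymm.mp ha.isHermitian)
    ((isUnit_iff_isUnit_det a).mp ha.isUnit) hb.ne
end

section
/- Let F = α + β be a Randers norm on ℝⁿ with b = ‖β‖_α < 1, and let ξ ∈ (ℝⁿ)*, ξ ≠ 0, with y = L^{-1}(ξ). Then α(y) = (1/(1−b²)) · F*(ξ)²/α*(ξ) and β(y) = −(F*(ξ)/(1−b²)) · (β*(ξ)/α*(ξ) + b²), where F* = α* + β* is the dual Randers norm. -/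
/-!
A Randers norm `F = α + β` is positively homogeneous of degree one, so `F²` is 2-homogeneous and
its differential is 1-homogeneous; Euler's identity for the latter gives
`g(y) y = ½ ∇F²(y) = F(y) ∇F(y)`, with `∇F(y) = a y / α(y) + b`. Writing `r = β(y) / α(y)`, one
finds `ξ ⬝ a⁻¹ ξ = F(y)² (1 + 2r + b²)` and `(a⁻¹ b) ⬝ ξ = F(y) (r + b²)`, whence
`α*(ξ) = F(y)² / ((1 - b²) α(y))`, `β*(ξ) = -F(y) (r + b²) / (1 - b²)` and `F*(ξ) = F(y)`;
both formulas follow by solving for `α(y)` and `β(y)`.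
-/

open Matrix

section Euler

variable {E G : Type*} [NormedAddCommGroup E] [NormedSpace ℝ E] [NormedAddCommGroup G]
  [NormedSpace ℝ G]

theorem HasFDerivAt.apply_self_of_homogeneous {φ : E → G} {φ' : E →L[ℝ] G} {y : E} {k : ℕ}
    (hφ : HasFDerivAt φ φ' y) (hom : ∀ t : ℝ, 0 < t → φ (t • y) = t ^ k • φ y) :
    φ' y = (k : ℝ) • φ y := by
  have hray : HasDerivAt (fun t : ℝ => φ (t • y)) (φ' y) 1 := by
    have hline : HasDerivAt (fun t : ℝ => t • y) y 1 := by
      simpa using (hasDerivAt_id (1 : ℝ)).smul_const y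
    exact (one_smul ℝ y ▸ hφ).comp_hasDerivAt 1 hline
  have hpow : HasDerivAt (fun t : ℝ => t ^ k • φ y) ((k : ℝ) • φ y) 1 := by
    simpa using (hasDerivAt_pow k (1 : ℝ)).smul_const (φ y)
  refine hray.unique (hpow.congr_of_eventuallyEq ?_)
  filter_upwards [lt_mem_nhds one_pos] with t ht using hom t ht

theorem fderiv_smul_of_homogeneous {f : E → G} {t : ℝ} {k : ℕ}
    (hom : ∀ z, f (t • z) = t ^ k • f z) (z : E) :
    t • fderiv ℝ f (t • z) = t ^ k • fderiv ℝ f z := by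
  rw [← fderiv_comp_smul, show (f <| t • ·) = t ^ k • f from funext hom,
    fderiv_const_smul_field, Pi.smul_apply]

end Euler

theorem gmat_mulVec_self {n : ℕ} {F : (Fin n → ℝ) → ℝ} {y : Fin n → ℝ}
    (hF : ∀ t : ℝ, 0 < t → ∀ z, F (t • z) = t * F z)
    (hF2 : ContDiffAt ℝ 2 (fun w => F w ^ 2) y) :
    gmat F y *ᵥ y = fun i => (1 / 2) * fderiv ℝ (fun w => F w ^ 2) y (Pi.single i 1) := by
  set f := fun w => F w ^ 2
  have hD : DifferentiableAt ℝ (fderiv ℝ f) y :=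
    (hF2.fderiv_right (m := 1) (by norm_num)).differentiableAt one_ne_zero
  have hD_hom : ∀ t : ℝ, 0 < t → fderiv ℝ f (t • y) = t ^ 1 • fderiv ℝ f y := by
    intro t ht
    have := fderiv_smul_of_homogeneous (f := f) (t := t) (k := 2)
      (fun z => by simp only [f, hF t ht, smul_eq_mul]; ring) y
    rw [pow_two, mul_smul] at this
    simpa using smul_right_injective _ ht.ne' this
  have euler := hD.hasFDerivAt.apply_self_of_homogeneous hD_hom
  ext i
  have hpartial : fderiv ℝ (fun z => fderiv ℝ f z (Pi.single i 1)) y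
      = (fderiv ℝ (fderiv ℝ f) y).flip (Pi.single i 1) := by
    simp [fderiv_clm_apply hD (differentiableAt_const _)]
  calc (gmat F y *ᵥ y) i
      = 1 / 2 * fderiv ℝ (fderiv ℝ f) y (∑ j, y j • Pi.single j 1) (Pi.single i 1) := by
        simp only [gmat, mulVec, dotProduct, f, hpartial, map_sum, map_smul,
          ContinuousLinearMap.flip_apply, FunLike.coe_sum, Finset.sum_apply,
          FunLike.coe_smul, Pi.smul_apply, smul_eq_mul, Finset.mul_sum]
        exact Finset.sum_congr rfl fun j _ => by ring
    _ = 1 / 2 * fderiv ℝ f y (Pi.single i 1) := by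
        rw [← pi_eq_sum_univ', euler]
        simp

section Randers

variable {ι : Type*} [Fintype ι]

noncomputable def randers (a : Matrix ι ι ℝ) (b y : ι → ℝ) : ℝ :=
  √(y ⬝ᵥ a *ᵥ y) + b ⬝ᵥ y

noncomputable def randersGrad (a : Matrix ι ι ℝ) (b y : ι → ℝ) : ι → ℝ :=
  (√(y ⬝ᵥ a *ᵥ y))⁻¹ • a *ᵥ y + b

noncomputable def randersDualMetric [DecidableEq ι] (a : Matrix ι ι ℝ) (b : ι → ℝ) :
    Matrix ι ι ℝ :=
  ((1 - b ⬝ᵥ a⁻¹ *ᵥ b) ^ 2)⁻¹ • ((1 - b ⬝ᵥ a⁻¹ *ᵥ b) • a⁻¹ + vecMulVec (a⁻¹ *ᵥ b) (a⁻¹ *ᵥ b))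

theorem randers_smul (a : Matrix ι ι ℝ) (b : ι → ℝ) {t : ℝ} (ht : 0 ≤ t) (y : ι → ℝ) :
    randers a b (t • y) = t * randers a b y := by
  have hsq : √(t * t * (y ⬝ᵥ a *ᵥ y)) = t * √(y ⬝ᵥ a *ᵥ y) := by
    rw [Real.sqrt_mul (mul_self_nonneg t), Real.sqrt_mul_self ht]
  simp only [randers, mulVec_smul, dotProduct_smul, smul_dotProduct, smul_eq_mul, ← mul_assoc,
    hsq]
  ring

theorem contDiffAt_randers (a : Matrix ι ι ℝ) (b : ι → ℝ) {n : WithTop ℕ∞} {y : ι → ℝ}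
    (hy : y ⬝ᵥ a *ᵥ y ≠ 0) : ContDiffAt ℝ n (randers a b) y := by
  have hα : ContDiff ℝ n (fun w : ι → ℝ => w ⬝ᵥ a *ᵥ w) := by
    simp only [dotProduct, mulVec]
    fun_prop
  have hβ : ContDiff ℝ n (fun w : ι → ℝ => b ⬝ᵥ w) := by
    simp only [dotProduct]
    fun_prop
  exact (hα.contDiffAt.sqrt hy).add hβ.contDiffAt

theorem hasLineDerivAt_dotProduct_mulVec_self (a : Matrix ι ι ℝ) (y v : ι → ℝ) :
    HasLineDerivAt ℝ (fun w => w ⬝ᵥ a *ᵥ w) (y ⬝ᵥ a *ᵥ v + v ⬝ᵥ a *ᵥ y) y v := by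
  classical
  convert (Matrix.toQuadraticForm' a).hasLineDerivAt y v using 1
  · ext w
    simp [Matrix.toQuadraticForm', Matrix.toLinearMap₂'_apply']
  · simp only [QuadraticMap.polar, toQuadraticForm', LinearMap.BilinMap.toQuadraticMap_apply,
      map_add, LinearMap.add_apply, toLinearMap₂'_apply']
    ring

theorem hasLineDerivAt_randers (a : Matrix ι ι ℝ) (b : ι → ℝ) {y : ι → ℝ}
    (hy : y ⬝ᵥ a *ᵥ y ≠ 0) (v : ι → ℝ) :
    HasLineDerivAt ℝ (randers a b)
      ((y ⬝ᵥ a *ᵥ v + v ⬝ᵥ a *ᵥ y) / (2 * √(y ⬝ᵥ a *ᵥ y)) + b ⬝ᵥ v) y v := by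
  have hα := (hasLineDerivAt_dotProduct_mulVec_self a y v).sqrt (by simpa using hy)
  have hβ : HasDerivAt (fun t : ℝ => b ⬝ᵥ (y + t • v)) (b ⬝ᵥ v) 0 := by
    simpa [dotProduct_add] using ((hasDerivAt_id (0 : ℝ)).mul_const (b ⬝ᵥ v)).const_add (b ⬝ᵥ y)
  have h := hα.add hβ
  simp only [zero_smul, add_zero] at h
  exact h

theorem fderiv_randers_single [DecidableEq ι] {a : Matrix ι ι ℝ} (ha : a.IsSymm) (b : ι → ℝ)
    {y : ι → ℝ} (hy : 0 < y ⬝ᵥ a *ᵥ y) (i : ι) :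
    fderiv ℝ (randers a b) y (Pi.single i 1) = randersGrad a b y i := by
  have hd := (contDiffAt_randers a b (n := 1) hy.ne').differentiableAt one_ne_zero
  have hA : √(y ⬝ᵥ a *ᵥ y) ≠ 0 := (Real.sqrt_pos.2 hy).ne'
  have hleft : y ⬝ᵥ a *ᵥ Pi.single i 1 = (a *ᵥ y) i := by
    rw [dotProduct_mulVec, ← mulVec_transpose, ha.eq, dotProduct_single, mul_one]
  have hright : Pi.single i 1 ⬝ᵥ a *ᵥ y = (a *ᵥ y) i := by rw [single_dotProduct, one_mul]
  rw [(hd.hasFDerivAt.hasLineDerivAt _).unique (hasLineDerivAt_randers a b hy.ne' _), hleft,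
    hright, dotProduct_single, mul_one, randersGrad, Pi.add_apply, Pi.smul_apply, smul_eq_mul]
  field_simp
  ring

theorem Matrix.PosDef.inv_mulVec_dotProduct_mulVec [DecidableEq ι] {a : Matrix ι ι ℝ}
    (ha : a.PosDef) (b y : ι → ℝ) : (a⁻¹ *ᵥ b) ⬝ᵥ a *ᵥ y = b ⬝ᵥ y := by
  rw [dotProduct_mulVec, ← mulVec_transpose, (isHermitian_iff_isSymm.1 ha.isHermitian).eq,
    mulVec_mulVec,
    mul_nonsing_inv _ ha.det_pos.ne'.isUnit, one_mulVec]

theorem inv_mulVec_dotProduct_randersGrad [DecidableEq ι] {a : Matrix ι ι ℝ} (ha : a.PosDef)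
    (b y : ι → ℝ) :
    (a⁻¹ *ᵥ b) ⬝ᵥ randersGrad a b y = (√(y ⬝ᵥ a *ᵥ y))⁻¹ * (b ⬝ᵥ y) + b ⬝ᵥ a⁻¹ *ᵥ b := by
  rw [randersGrad, dotProduct_add, dotProduct_smul, ha.inv_mulVec_dotProduct_mulVec, smul_eq_mul,
    dotProduct_comm _ b]

theorem randersGrad_dotProduct_self (a : Matrix ι ι ℝ) (b y : ι → ℝ) :
    randersGrad a b y ⬝ᵥ y = randers a b y := by
  rw [randersGrad, add_dotProduct, smul_dotProduct, dotProduct_comm (a *ᵥ y), smul_eq_mul,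
    inv_mul_eq_div, Real.div_sqrt, randers, dotProduct_comm]

theorem randersGrad_dotProduct_inv_mulVec_self [DecidableEq ι] {a : Matrix ι ι ℝ}
    (ha : a.PosDef) (b : ι → ℝ) {y : ι → ℝ} (hy : y ≠ 0) :
    randersGrad a b y ⬝ᵥ a⁻¹ *ᵥ randersGrad a b y
      = 1 + 2 * ((√(y ⬝ᵥ a *ᵥ y))⁻¹ * (b ⬝ᵥ y)) + b ⬝ᵥ a⁻¹ *ᵥ b := by
  have hA : √(y ⬝ᵥ a *ᵥ y) ≠ 0 :=
    (Real.sqrt_pos.2 (by simpa using ha.dotProduct_mulVec_pos hy)).ne'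
  have hinv : a⁻¹ *ᵥ randersGrad a b y = (√(y ⬝ᵥ a *ᵥ y))⁻¹ • y + a⁻¹ *ᵥ b := by
    rw [randersGrad, mulVec_add, mulVec_smul, mulVec_mulVec,
      nonsing_inv_mul _ ha.det_pos.ne'.isUnit, one_mulVec]
  rw [hinv, dotProduct_add, dotProduct_smul, randersGrad_dotProduct_self,
    dotProduct_comm _ (a⁻¹ *ᵥ b), inv_mulVec_dotProduct_randersGrad ha, randers, smul_eq_mul]
  field_simp
  ring

theorem dotProduct_smul_add_vecMulVec_mulVec (M : Matrix ι ι ℝ) (u ξ : ι → ℝ) (c d : ℝ) :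
    ξ ⬝ᵥ (c • (d • M + vecMulVec u u)) *ᵥ ξ = c * (d * (ξ ⬝ᵥ M *ᵥ ξ) + (u ⬝ᵥ ξ) ^ 2) := by
  simp only [smul_mulVec, add_mulVec, vecMulVec_mulVec, dotProduct_smul, dotProduct_add,
    smul_eq_mul]
  simp [dotProduct_comm ξ u, sq]

theorem randersGrad_dotProduct_randersDualMetric_mulVec [DecidableEq ι] {a : Matrix ι ι ℝ}
    (ha : a.PosDef) (b : ι → ℝ) (hb : b ⬝ᵥ a⁻¹ *ᵥ b ≠ 1) {y : ι → ℝ} (hy : y ≠ 0) :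
    randersGrad a b y ⬝ᵥ randersDualMetric a b *ᵥ randersGrad a b y
      = (randers a b y / ((1 - b ⬝ᵥ a⁻¹ *ᵥ b) * √(y ⬝ᵥ a *ᵥ y))) ^ 2 := by
  have hQ : 0 < y ⬝ᵥ a *ᵥ y := by simpa using ha.dotProduct_mulVec_pos hy
  have hA : √(y ⬝ᵥ a *ᵥ y) ≠ 0 := (Real.sqrt_pos.2 hQ).ne'
  have hb' : 1 - b ⬝ᵥ a⁻¹ *ᵥ b ≠ 0 := sub_ne_zero.2 hb.symm
  rw [randersDualMetric, dotProduct_smul_add_vecMulVec_mulVec,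
    randersGrad_dotProduct_inv_mulVec_self ha b hy, inv_mulVec_dotProduct_randersGrad ha, randers]
  field_simp
  ring

end Randers

theorem gmat_randers_mulVec_self {n : ℕ} {a : Matrix (Fin n) (Fin n) ℝ} (ha : a.PosDef)
    (b : Fin n → ℝ) {y : Fin n → ℝ} (hy : y ≠ 0) :
    gmat (randers a b) y *ᵥ y = randers a b y • randersGrad a b y := by
  have hQ : 0 < y ⬝ᵥ a *ᵥ y := by simpa using ha.dotProduct_mulVec_pos hy
  have hF : ContDiffAt ℝ 2 (randers a b) y := contDiffAt_randers a b hQ.ne'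
  rw [gmat_mulVec_self (fun t ht => randers_smul a b ht.le) (hF.pow 2)]
  ext i
  rw [fderiv_fun_pow 2 (hF.differentiableAt two_ne_zero), _root_.smul_apply,
    fderiv_randers_single (isHermitian_iff_isSymm.1 ha.isHermitian) b hQ]
  simp only [nsmul_eq_mul, Nat.cast_ofNat, Nat.add_one_sub_one, pow_one, smul_eq_mul,
    Pi.smul_apply]
  ring

theorem stmt_11 {n : ℕ} (a : Matrix (Fin n) (Fin n) ℝ) (ha : a.PosDef) (b : Fin n → ℝ)
    (b2 : ℝ) (hb2 : b2 = b ⬝ᵥ (a⁻¹ *ᵥ b)) (hb : b2 < 1)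
    (F : (Fin n → ℝ) → ℝ) (hF : ∀ y, F y = Real.sqrt (y ⬝ᵥ a *ᵥ y) + b ⬝ᵥ y)
    (astar : Matrix (Fin n) (Fin n) ℝ)
    (hastar : astar = ((1 - b2) ^ 2)⁻¹ • ((1 - b2) • a⁻¹ + vecMulVec (a⁻¹ *ᵥ b) (a⁻¹ *ᵥ b)))
    (bstar : Fin n → ℝ) (hbstar : bstar = -(1 - b2)⁻¹ • (a⁻¹ *ᵥ b))
    (αstar βstar Fstar : (Fin n → ℝ) → ℝ)
    (hαstar : ∀ ξ, αstar ξ = Real.sqrt (ξ ⬝ᵥ astar *ᵥ ξ))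
    (hβstar : ∀ ξ, βstar ξ = bstar ⬝ᵥ ξ)
    (hFstar : ∀ ξ, Fstar ξ = αstar ξ + βstar ξ)
    (ξ : Fin n → ℝ) (hξ : ξ ≠ 0)
    -- y = L⁻¹(ξ) : the Legendre preimage of ξ
    (y : Fin n → ℝ) (hy : y ≠ 0) (hLy : (gmat F y) *ᵥ y = ξ) :
    Real.sqrt (y ⬝ᵥ a *ᵥ y) = (1 / (1 - b2)) * ((Fstar ξ) ^ 2 / αstar ξ) ∧
      b ⬝ᵥ y = -(Fstar ξ / (1 - b2)) * (βstar ξ / αstar ξ + b2) := by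
  obtain rfl : F = randers a b := funext hF
  subst hb2 hbstar
  obtain rfl : astar = randersDualMetric a b := hastar
  have hA : 0 < √(y ⬝ᵥ a *ᵥ y) := Real.sqrt_pos.2 (by simpa using ha.dotProduct_mulVec_pos hy)
  have hb' : 0 < 1 - b ⬝ᵥ a⁻¹ *ᵥ b := sub_pos.2 hb
  rw [gmat_randers_mulVec_self ha b hy] at hLy
  subst hLy
  have hF0 : randers a b y ≠ 0 := fun h => hξ (by rw [h, zero_smul])
  have hα : αstar (randers a b y • randersGrad a b y)
      = randers a b y ^ 2 / ((1 - b ⬝ᵥ a⁻¹ *ᵥ b) * √(y ⬝ᵥ a *ᵥ y)) := by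
    rw [hαstar, mulVec_smul, dotProduct_smul, smul_dotProduct,
      randersGrad_dotProduct_randersDualMetric_mulVec ha b hb.ne hy, smul_eq_mul, smul_eq_mul,
      ← Real.sqrt_sq (by positivity : 0 ≤ randers a b y ^ 2 / _)]
    congr 1
    ring
  have hβ : βstar (randers a b y • randersGrad a b y) = -(randers a b y *
      ((√(y ⬝ᵥ a *ᵥ y))⁻¹ * (b ⬝ᵥ y) + b ⬝ᵥ a⁻¹ *ᵥ b)) / (1 - b ⬝ᵥ a⁻¹ *ᵥ b) := by
    rw [hβstar, smul_dotProduct, dotProduct_smul, inv_mulVec_dotProduct_randersGrad ha,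
      smul_eq_mul, smul_eq_mul]
    field_simp
  rw [hFstar, hα, hβ]
  rw [randers] at hF0 ⊢
  constructor <;> field_simp <;> ring
end
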